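/- (Regenerative decomposition, equation (9) of the paper.) For each n ≥ 1, let d_n = ∑_{y∈S} B^{n-1}(z,y) − ∑_{y∈S} B^n(z,y) (the probability that the killed chain started at z is killed exactly at time n), and let h_n = (∑_{y∈S} g_{n-1}(y) − ∑_{y∈S} g_n(y)) − f_n(z) (the probability that the chain started at z is killed exactly at time n without ever having returned to z). Then for every n ≥ 1, the convolution identity d_n = ∑_{k=1}^{n-1} f_k(z)·d_{n-k} + h_n holds; consequently, for every γ ∈ ℝ, the identity ∑_{n≥1} e^{γn}·d_n = (∑_{n≥1} e^{γn}·f_n(z))·(∑_{n≥1} e^{γn}·d_n) + ∑_{n≥1} e^{γn}·h_n holds in [0, ∞] (all terms nonnegative, with the convention 0·∞ = 0). -/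

import Mathlib

/-- Matrix powers: `B^0 = I`, `B^{n+1}(x,y) = ∑_w B^n(x,w) B(w,y)`. -/
noncomputable def matPow {S : Type*} [DecidableEq S] (B : S → S → ℝ) : ℕ → S → S → ℝ
  | 0 => fun x y => if x = y then (1 : ℝ) else 0
  | n + 1 => fun x y => ∑' w, matPow B n x w * B w y

/-- First-return quantities: `fret B z n x` is the probability that the killed chain
with sub-stochastic transition matrix `B`, started at `x`, first hits `z` at time `n`
without having been killed: `f_1(x) = B(x,z)`, `f_{n+1}(x) = ∑_{w ≠ z} B(x,w) f_n(w)`.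
(The value at `n = 0` is set to `0` by convention.) -/
noncomputable def fret {S : Type*} [DecidableEq S] (B : S → S → ℝ) (z : S) : ℕ → S → ℝ
  | 0 => fun _ => 0
  | 1 => fun x => B x z
  | n + 2 => fun x => ∑' w, if w = z then 0 else B x w * fret B z (n + 1) w

/-- `grow B z j y` is the probability that the killed chain started at `z` is at `y`
at time `j` without having been killed or having returned to `z`:
`g_0 = δ_z`, and for `j ≥ 1`, `g_j(z) = 0` and `g_j(y) = ∑_x g_{j-1}(x) B(x,y)` for `y ≠ z`. -/
noncomputable def grow {S : Type*} [DecidableEq S] (B : S → S → ℝ) (z : S) : ℕ → S → ℝ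
  | 0 => fun y => if y = z then 1 else 0
  | j + 1 => fun y => if y = z then 0 else ∑' x, grow B z j x * B x y

/-- The Perron-Frobenius column eigenvector candidate
`u*(x) = ∑_{n ≥ 1} e^{θ n} f_n(x)`. -/
noncomputable def uStar {S : Type*} [DecidableEq S] (B : S → S → ℝ) (z : S) (θ : ℝ)
    (x : S) : ℝ :=
  ∑' n : ℕ, Real.exp (θ * ((n : ℝ) + 1)) * fret B z (n + 1) x

/-- The Perron-Frobenius row eigenvector candidate
`η*(y) = ∑_{j ≥ 0} e^{θ j} g_j(y)`. -/
noncomputable def etaStar {S : Type*} [DecidableEq S] (B : S → S → ℝ) (z : S) (θ : ℝ)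
    (y : S) : ℝ :=
  ∑' j : ℕ, Real.exp (θ * (j : ℝ)) * grow B z j y

/-- `survD B z n` (for `n ≥ 1`) is the probability that the killed chain started at `z`
is killed exactly at time `n`: `d_n = ∑_y B^{n-1}(z,y) - ∑_y B^n(z,y)`. -/
noncomputable def survD {S : Type*} [DecidableEq S] (B : S → S → ℝ) (z : S) (n : ℕ) : ℝ :=
  (∑' y, matPow B (n - 1) z y) - ∑' y, matPow B n z y

/-- `survH B z n` (for `n ≥ 1`) is the probability that the chain started at `z` is killed
exactly at time `n` without ever having returned to `z`:
`h_n = (∑_y g_{n-1}(y) - ∑_y g_n(y)) - f_n(z)`. -/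
noncomputable def survH {S : Type*} [DecidableEq S] (B : S → S → ℝ) (z : S) (n : ℕ) : ℝ :=
  ((∑' y, grow B z (n - 1) y) - ∑' y, grow B z n y) - fret B z n z


/-!
Split the paths of the killed chain from `z` according to the time of their first return to
`z`: for every `n`, `B^n(z, y) = ∑_{k=1}^{n} f_k(z) B^{n-k}(z, y) + g_n(y)`, the last term
collecting the paths that have not returned by time `n`. Summing over `y` and differencing in
`n` gives the convolution identity for the killing probabilities `d_n`; all terms being
nonnegative, the Cauchy product in `[0, ∞]` turns it into the generating-function identity.

The one delicate point is that `f_{n+1}(z)`, defined by a backward recursion, also has the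
forward form `∑_x g_n(x) B(x, z)`: by Fubini, the pairing `∑_x g_j(x) f_{n+1}(x)` does not
change when one step is moved from `f` to `g`.
-/

open Finset

theorem tsum_comm_of_nonneg {α β : Type*} {f : α → β → ℝ} (h0 : ∀ a b, 0 ≤ f a b)
    (h1 : ∀ a, Summable (f a)) (h2 : Summable fun a => ∑' b, f a b) :
    (Summable fun b => ∑' a, f a b) ∧ ∑' a, ∑' b, f a b = ∑' b, ∑' a, f a b := by
  have hf : Summable (Function.uncurry f) :=
    (summable_prod_of_nonneg fun p => h0 p.1 p.2).2 ⟨h1, h2⟩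
  obtain ⟨hcol, hswap⟩ :=
    (summable_prod_of_nonneg fun p : β × α => h0 p.2 p.1).1 hf.prod_symm
  exact ⟨hswap, (hf.tsum_comm' h1 hcol).symm⟩

theorem ENNReal.tsum_mul_tsum_eq_tsum_sum_range (f g : ℕ → ENNReal) :
    (∑' n, f n) * ∑' n, g n = ∑' n, ∑ k ∈ range (n + 1), f k * g (n - k) := by
  simp_rw [← Nat.sum_antidiagonal_eq_sum_range_succ fun k l => f k * g l,
    ← ENNReal.tsum_mul_right, ← ENNReal.tsum_mul_left]
  rw [← ENNReal.tsum_prod, ← HasAntidiagonal.sigmaAntidiagonalEquivProd.tsum_eq,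
    ENNReal.tsum_sigma']
  exact tsum_congr fun n => Finset.tsum_subtype (antidiagonal n) fun p => f p.1 * g p.2

theorem ENNReal.tsum_of_renewal_equation {a b c : ℕ → ENNReal}
    (h : ∀ n, a n = ∑ i ∈ range n, b i * a (n - 1 - i) + c n) :
    ∑' n, a n = (∑' n, b n) * (∑' n, a n) + ∑' n, c n := by
  rw [ENNReal.tsum_mul_tsum_eq_tsum_sum_range, tsum_congr h, ENNReal.tsum_add,
    tsum_eq_zero_add' ENNReal.summable]
  simp

structure IsSubstochastic {S : Type*} (B : S → S → ℝ) : Prop where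
  nonneg : ∀ x y, 0 ≤ B x y
  summable : ∀ x, Summable (B x)
  tsum_le_one : ∀ x, ∑' y, B x y ≤ 1

/-- Chung's taboo kernel, forbidding the transitions into `z`. -/
def taboo {S : Type*} [DecidableEq S] (B : S → S → ℝ) (z : S) : S → S → ℝ :=
  fun x y => if y = z then 0 else B x y

namespace IsSubstochastic

variable {S : Type*} {B : S → S → ℝ} {p q : S → ℝ}

theorem le_one (hB : IsSubstochastic B) (x y : S) : B x y ≤ 1 :=
  ((hB.summable x).le_tsum y fun w _ => hB.nonneg x w).trans (hB.tsum_le_one x)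

theorem summable_mulVec (hB : IsSubstochastic B) (hq0 : ∀ w, 0 ≤ q w) (hq1 : ∀ w, q w ≤ 1)
    (x : S) : Summable fun w => B x w * q w :=
  .of_nonneg_of_le (fun w => mul_nonneg (hB.nonneg x w) (hq0 w))
    (fun w => mul_le_of_le_one_right (hB.nonneg x w) (hq1 w)) (hB.summable x)

theorem tsum_mulVec_le_one (hB : IsSubstochastic B) (hq0 : ∀ w, 0 ≤ q w)
    (hq1 : ∀ w, q w ≤ 1) (x : S) : ∑' w, B x w * q w ≤ 1 :=
  ((hB.summable_mulVec hq0 hq1 x).tsum_le_tsum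
    (fun w => mul_le_of_le_one_right (hB.nonneg x w) (hq1 w)) (hB.summable x)).trans
    (hB.tsum_le_one x)

theorem summable_vecMul_summand (hB : IsSubstochastic B) (hp0 : ∀ w, 0 ≤ p w)
    (hp : Summable p) (y : S) : Summable fun w => p w * B w y :=
  .of_nonneg_of_le (fun w => mul_nonneg (hp0 w) (hB.nonneg w y))
    (fun w => mul_le_of_le_one_right (hp0 w) (hB.le_one w y)) hp

theorem summable_vecMul_and_tsum_le (hB : IsSubstochastic B) (hp0 : ∀ w, 0 ≤ p w)
    (hp : Summable p) :
    (Summable fun y => ∑' w, p w * B w y) ∧ ∑' y, ∑' w, p w * B w y ≤ ∑' w, p w := by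
  have hrow (w : S) : ∑' y, p w * B w y ≤ p w := by
    rw [tsum_mul_left]
    exact mul_le_of_le_one_right (hp0 w) (hB.tsum_le_one w)
  have hrows : Summable fun w => ∑' y, p w * B w y :=
    .of_nonneg_of_le (fun w => tsum_nonneg fun y => mul_nonneg (hp0 w) (hB.nonneg w y))
      hrow hp
  obtain ⟨hsum, hcomm⟩ := tsum_comm_of_nonneg
    (fun w y => mul_nonneg (hp0 w) (hB.nonneg w y)) (fun w => (hB.summable w).mul_left (p w))
    hrows
  exact ⟨hsum, hcomm ▸ hrows.tsum_le_tsum hrow hp⟩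

theorem summable_vecMul (hB : IsSubstochastic B) (hp0 : ∀ w, 0 ≤ p w) (hp : Summable p) :
    Summable fun y => ∑' w, p w * B w y :=
  (hB.summable_vecMul_and_tsum_le hp0 hp).1

theorem tsum_vecMul_le (hB : IsSubstochastic B) (hp0 : ∀ w, 0 ≤ p w) (hp : Summable p) :
    ∑' y, ∑' w, p w * B w y ≤ ∑' w, p w :=
  (hB.summable_vecMul_and_tsum_le hp0 hp).2

theorem tsum_mul_mulVec (hB : IsSubstochastic B) (hp0 : ∀ w, 0 ≤ p w) (hp : Summable p)
    (hq0 : ∀ w, 0 ≤ q w) (hq1 : ∀ w, q w ≤ 1) :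
    ∑' x, p x * ∑' w, B x w * q w = ∑' w, (∑' x, p x * B x w) * q w := by
  have h0 (x w : S) : 0 ≤ p x * (B x w * q w) :=
    mul_nonneg (hp0 x) (mul_nonneg (hB.nonneg x w) (hq0 w))
  have hrows : Summable fun x => ∑' w, p x * (B x w * q w) := by
    refine .of_nonneg_of_le (fun x => tsum_nonneg (h0 x)) (fun x => ?_) hp
    rw [tsum_mul_left]
    exact mul_le_of_le_one_right (hp0 x) (hB.tsum_mulVec_le_one hq0 hq1 x)
  simp_rw [← tsum_mul_left, ← tsum_mul_right, mul_assoc]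
  exact (tsum_comm_of_nonneg h0 (fun x => (hB.summable_mulVec hq0 hq1 x).mul_left _) hrows).2

theorem taboo [DecidableEq S] (hB : IsSubstochastic B) (z : S) :
    IsSubstochastic (taboo B z) := by
  have h0 (x y : S) : 0 ≤ _root_.taboo B z x y := by
    unfold _root_.taboo; split_ifs
    exacts [le_rfl, hB.nonneg x y]
  have hle (x y : S) : _root_.taboo B z x y ≤ B x y := by
    unfold _root_.taboo; split_ifs
    exacts [hB.nonneg x y, le_rfl]
  have hs (x : S) : Summable (_root_.taboo B z x) := .of_nonneg_of_le (h0 x) (hle x) (hB.summable x)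
  exact ⟨h0, hs, fun x => ((hs x).tsum_le_tsum (hle x) (hB.summable x)).trans (hB.tsum_le_one x)⟩

end IsSubstochastic

section KilledChain

variable {S : Type*} [DecidableEq S] {B : S → S → ℝ} {z : S}

theorem matPow_zero_eq (x : S) : matPow B 0 x = fun y => if y = x then 1 else 0 := by
  ext y
  simp [matPow, eq_comm]

theorem tsum_matPow_zero (x : S) : ∑' y, matPow B 0 x y = 1 := by
  rw [matPow_zero_eq, tsum_ite_eq]

theorem matPow_nonneg (hB : IsSubstochastic B) (n : ℕ) (x y : S) : 0 ≤ matPow B n x y := by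
  induction n generalizing y with
  | zero => rw [matPow_zero_eq]; positivity
  | succ n ih => exact tsum_nonneg fun w => mul_nonneg (ih w) (hB.nonneg w y)

theorem matPow_summable (hB : IsSubstochastic B) (n : ℕ) (x : S) :
    Summable (matPow B n x) := by
  induction n with
  | zero => rw [matPow_zero_eq]; exact (hasSum_ite_eq x 1).summable
  | succ n ih => exact hB.summable_vecMul (matPow_nonneg hB n x) ih

theorem tsum_matPow_succ_le (hB : IsSubstochastic B) (n : ℕ) (x : S) :
    ∑' y, matPow B (n + 1) x y ≤ ∑' y, matPow B n x y :=
  hB.tsum_vecMul_le (matPow_nonneg hB n x) (matPow_summable hB n x)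

theorem grow_succ (j : ℕ) (y : S) :
    grow B z (j + 1) y = ∑' x, grow B z j x * taboo B z x y := by
  by_cases hy : y = z <;> simp [grow, taboo, hy]

theorem fret_succ_succ (n : ℕ) (x : S) :
    fret B z (n + 2) x = ∑' w, taboo B z x w * fret B z (n + 1) w := by
  simp only [fret, taboo, ite_mul, zero_mul]

theorem grow_nonneg (hB : IsSubstochastic B) (j : ℕ) (y : S) : 0 ≤ grow B z j y := by
  induction j generalizing y with
  | zero => simp only [grow]; positivity
  | succ j ih =>
    rw [grow_succ]
    exact tsum_nonneg fun x => mul_nonneg (ih x) ((hB.taboo z).nonneg x y)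

theorem grow_summable (hB : IsSubstochastic B) (j : ℕ) : Summable (grow B z j) := by
  induction j with
  | zero => exact (hasSum_ite_eq z 1).summable
  | succ j ih =>
    simp_rw [funext (grow_succ j)]
    exact (hB.taboo z).summable_vecMul (grow_nonneg hB j) ih

theorem fret_nonneg_and_le_one (hB : IsSubstochastic B) :
    ∀ n (x : S), 0 ≤ fret B z n x ∧ fret B z n x ≤ 1
  | 0, _ => ⟨le_rfl, zero_le_one⟩
  | 1, x => ⟨hB.nonneg x z, hB.le_one x z⟩
  | n + 2, x => by
    have ih := fret_nonneg_and_le_one hB (n + 1)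
    rw [fret_succ_succ]
    exact ⟨tsum_nonneg fun w => mul_nonneg ((hB.taboo z).nonneg x w) (ih w).1,
      (hB.taboo z).tsum_mulVec_le_one (fun w => (ih w).1) (fun w => (ih w).2) x⟩

theorem fret_nonneg (hB : IsSubstochastic B) (n : ℕ) (x : S) : 0 ≤ fret B z n x :=
  (fret_nonneg_and_le_one hB n x).1

theorem fret_le_one (hB : IsSubstochastic B) (n : ℕ) (x : S) : fret B z n x ≤ 1 :=
  (fret_nonneg_and_le_one hB n x).2

theorem tsum_grow_mul_fret (hB : IsSubstochastic B) (n j : ℕ) :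
    ∑' x, grow B z j x * fret B z (n + 1) x = ∑' x, grow B z (j + n) x * B x z := by
  induction n generalizing j with
  | zero => rfl
  | succ n ih =>
    simp_rw [fret_succ_succ, (hB.taboo z).tsum_mul_mulVec (grow_nonneg hB j)
      (grow_summable hB j) (fret_nonneg hB _) (fret_le_one hB _), ← grow_succ, ih, add_assoc, add_comm 1 n]

theorem fret_succ_self (hB : IsSubstochastic B) (n : ℕ) :
    fret B z (n + 1) z = ∑' x, grow B z n x * B x z := by
  rw [← zero_add n, ← tsum_grow_mul_fret hB]
  simp [grow]

theorem tsum_grow_mul (hB : IsSubstochastic B) (n : ℕ) (y : S) :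
    ∑' x, grow B z n x * B x y = fret B z (n + 1) z * matPow B 0 z y + grow B z (n + 1) y := by
  by_cases hy : y = z
  · subst hy
    simp [fret_succ_self hB, matPow, grow]
  · simp [grow, matPow, hy, Ne.symm hy]

theorem matPow_eq_sum_fret_mul_add_grow (hB : IsSubstochastic B) (n : ℕ) (y : S) :
    matPow B n z y =
      ∑ k ∈ Ico 1 (n + 1), fret B z k z * matPow B (n - k) z y + grow B z n y := by
  induction n generalizing y with
  | zero => simp [matPow, grow, eq_comm]
  | succ n ih =>
    have hterm (k : ℕ) : Summable fun w => fret B z k z * (matPow B (n - k) z w * B w y) :=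
      (hB.summable_vecMul_summand (matPow_nonneg hB _ z) (matPow_summable hB _ z) y).mul_left _
    have hgrow : Summable fun w => grow B z n w * B w y :=
      hB.summable_vecMul_summand (grow_nonneg hB n) (grow_summable hB n) y
    calc matPow B (n + 1) z y
        = ∑' w, (∑ k ∈ Ico 1 (n + 1), fret B z k z * (matPow B (n - k) z w * B w y)
            + grow B z n w * B w y) := by
          show ∑' w, matPow B n z w * B w y = _
          simp_rw [ih, add_mul, sum_mul, mul_assoc]
      _ = ∑ k ∈ Ico 1 (n + 1), fret B z k z * matPow B (n + 1 - k) z y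
            + (fret B z (n + 1) z * matPow B 0 z y + grow B z (n + 1) y) := by
          rw [(summable_sum fun k _ => hterm k).tsum_add hgrow,
            Summable.tsum_finsetSum fun k _ => hterm k, tsum_grow_mul hB]
          congr 1
          refine sum_congr rfl fun k hk => ?_
          rw [tsum_mul_left, show n + 1 - k = n - k + 1 by grind]
          rfl
      _ = _ := by rw [sum_Ico_succ_top (b := n + 1) (by omega), Nat.sub_self, add_assoc]

theorem tsum_matPow_eq (hB : IsSubstochastic B) (n : ℕ) :
    ∑' y, matPow B n z y =
      ∑ k ∈ Ico 1 (n + 1), fret B z k z * ∑' y, matPow B (n - k) z y + ∑' y, grow B z n y := by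
  have hterm (k : ℕ) : Summable fun y => fret B z k z * matPow B (n - k) z y :=
    (matPow_summable hB _ z).mul_left _
  simp_rw [← tsum_mul_left]
  rw [tsum_congr (matPow_eq_sum_fret_mul_add_grow hB n),
    (summable_sum fun k _ => hterm k).tsum_add (grow_summable hB n),
    Summable.tsum_finsetSum fun k _ => hterm k]

theorem survD_eq_sum_add_survH (hB : IsSubstochastic B) (n : ℕ) (hn : 1 ≤ n) :
    survD B z n = ∑ k ∈ Ico 1 n, fret B z k z * survD B z (n - k) + survH B z n := by
  obtain ⟨n, rfl⟩ := Nat.exists_eq_add_of_le' hn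
  have hprev := tsum_matPow_eq (z := z) hB n
  have hnext := tsum_matPow_eq (z := z) hB (n + 1)
  rw [sum_Ico_succ_top (by omega), Nat.sub_self, tsum_matPow_zero, mul_one] at hnext
  have hsum : ∑ k ∈ Ico 1 (n + 1), fret B z k z * survD B z (n + 1 - k) =
      ∑ k ∈ Ico 1 (n + 1), fret B z k z * ∑' y, matPow B (n - k) z y
        - ∑ k ∈ Ico 1 (n + 1), fret B z k z * ∑' y, matPow B (n + 1 - k) z y := by
    rw [← sum_sub_distrib]
    refine sum_congr rfl fun k hk => ?_
    rw [survD, ← mul_sub, show n + 1 - k - 1 = n - k by grind]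
  rw [hsum, survD, survH, Nat.add_sub_cancel]
  linarith

theorem survD_succ_nonneg (hB : IsSubstochastic B) (n : ℕ) : 0 ≤ survD B z (n + 1) := by
  rw [survD, Nat.add_sub_cancel, sub_nonneg]
  exact tsum_matPow_succ_le hB n z

theorem survH_succ_nonneg (hB : IsSubstochastic B) (n : ℕ) : 0 ≤ survH B z (n + 1) := by
  have hsplit : ∑' y, ∑' x, grow B z n x * B x y =
      fret B z (n + 1) z + ∑' y, grow B z (n + 1) y := by
    simp_rw [tsum_grow_mul hB n]
    rw [((matPow_summable hB 0 z).mul_left _).tsum_add (grow_summable hB _), tsum_mul_left,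
      tsum_matPow_zero, mul_one]
  have hle := hB.tsum_vecMul_le (grow_nonneg (z := z) hB n) (grow_summable hB n)
  rw [survH, Nat.add_sub_cancel]
  linarith

end KilledChain

theorem tsum_ofReal_of_renewal {d f h : ℕ → ℝ} (hf : ∀ n, 0 ≤ f n) (hd : ∀ n, 0 ≤ d n)
    (hh : ∀ n, 0 ≤ h n) (hconv : ∀ n, d n = ∑ i ∈ range n, f i * d (n - 1 - i) + h n) :
    ∑' n, ENNReal.ofReal (d n) =
      (∑' n, ENNReal.ofReal (f n)) * (∑' n, ENNReal.ofReal (d n)) + ∑' n, ENNReal.ofReal (h n) :=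
  ENNReal.tsum_of_renewal_equation fun n => by
    have hfd (i : ℕ) : 0 ≤ f i * d (n - 1 - i) := mul_nonneg (hf i) (hd _)
    rw [hconv n, ENNReal.ofReal_add (sum_nonneg fun i _ => hfd i) (hh n),
      ENNReal.ofReal_sum_of_nonneg fun i _ => hfd i]
    simp_rw [ENNReal.ofReal_mul (hf _)]

theorem exp_mul_renewal {d f h : ℕ → ℝ} (γ : ℝ)
    (hconv : ∀ n, 1 ≤ n → d n = ∑ k ∈ Ico 1 n, f k * d (n - k) + h n) (n : ℕ) :
    Real.exp (γ * (n + 1)) * d (n + 1) =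
      ∑ i ∈ range n, Real.exp (γ * (i + 1)) * f (i + 1) *
          (Real.exp (γ * ((n - 1 - i : ℕ) + 1)) * d (n - 1 - i + 1))
        + Real.exp (γ * (n + 1)) * h (n + 1) := by
  rw [hconv (n + 1) (by omega), mul_add, sum_Ico_eq_sum_range, Nat.add_sub_cancel, mul_sum]
  congr 1
  refine sum_congr rfl fun i hi => ?_
  obtain ⟨j, rfl⟩ : ∃ j, n = i + j + 1 := ⟨n - 1 - i, by grind⟩
  rw [show i + j + 1 - 1 - i = j by omega, show i + j + 1 + 1 - (1 + i) = j + 1 by omega,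
    add_comm 1 i]
  have hexp : γ * (((i + j + 1 : ℕ) : ℝ) + 1) = γ * (i + 1) + γ * (j + 1) := by
    push_cast; ring
  rw [hexp, Real.exp_add]
  ring

theorem tsum_ofReal_exp_mul_of_renewal {d f h : ℕ → ℝ} (hf : ∀ n, 0 ≤ f (n + 1))
    (hd : ∀ n, 0 ≤ d (n + 1)) (hh : ∀ n, 0 ≤ h (n + 1))
    (hconv : ∀ n, 1 ≤ n → d n = ∑ k ∈ Ico 1 n, f k * d (n - k) + h n) (γ : ℝ) :
    ∑' n : ℕ, ENNReal.ofReal (Real.exp (γ * ((n : ℝ) + 1)) * d (n + 1)) =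
      (∑' n : ℕ, ENNReal.ofReal (Real.exp (γ * ((n : ℝ) + 1)) * f (n + 1)))
        * (∑' n : ℕ, ENNReal.ofReal (Real.exp (γ * ((n : ℝ) + 1)) * d (n + 1)))
        + ∑' n : ℕ, ENNReal.ofReal (Real.exp (γ * ((n : ℝ) + 1)) * h (n + 1)) :=
  tsum_ofReal_of_renewal (fun n => mul_nonneg (Real.exp_pos _).le (hf n))
    (fun n => mul_nonneg (Real.exp_pos _).le (hd n))
    (fun n => mul_nonneg (Real.exp_pos _).le (hh n)) (exp_mul_renewal γ hconv)

theorem stmt10_general {S : Type*} [DecidableEq S]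
    (B : S → S → ℝ)
    (hnn : ∀ x y, 0 ≤ B x y)
    (hrow : ∀ x, Summable (fun y => B x y))
    (hsub : ∀ x, ∑' y, B x y ≤ 1)
    (z : S) :
    (∀ n, 1 ≤ n →
      survD B z n =
        (∑ k ∈ Finset.Ico 1 n, fret B z k z * survD B z (n - k)) + survH B z n) ∧
    (∀ γ : ℝ,
      (∑' n : ℕ, ENNReal.ofReal (Real.exp (γ * ((n : ℝ) + 1)) * survD B z (n + 1)))
        = (∑' n : ℕ, ENNReal.ofReal (Real.exp (γ * ((n : ℝ) + 1)) * fret B z (n + 1) z))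
          * (∑' n : ℕ, ENNReal.ofReal (Real.exp (γ * ((n : ℝ) + 1)) * survD B z (n + 1)))
          + ∑' n : ℕ, ENNReal.ofReal (Real.exp (γ * ((n : ℝ) + 1)) * survH B z (n + 1))) := by
  have hB : IsSubstochastic B := ⟨hnn, hrow, hsub⟩
  have hconv (n : ℕ) (hn : 1 ≤ n) := survD_eq_sum_add_survH (z := z) hB n hn
  exact ⟨hconv, tsum_ofReal_exp_mul_of_renewal (fun n => fret_nonneg hB _ _)
    (survD_succ_nonneg hB) (survH_succ_nonneg hB) hconv⟩

/-- Regenerative decomposition (equation (9) of the paper): the convolution identity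
`d_n = ∑_{k=1}^{n-1} f_k(z) d_{n-k} + h_n` for all `n ≥ 1`, and the resulting
generating-function identity in `[0,∞]` for every `γ ∈ ℝ`. -/
theorem stmt10 {S : Type*} [Countable S] [Nonempty S] [DecidableEq S]
    (B : S → S → ℝ)
    (hnn : ∀ x y, 0 ≤ B x y)
    (hrow : ∀ x, Summable (fun y => B x y))
    (hsub : ∀ x, ∑' y, B x y ≤ 1)
    (hirr : ∀ x y, ∃ n, 1 ≤ n ∧ 0 < matPow B n x y)
    (z : S) :
    (∀ n, 1 ≤ n →
      survD B z n =
        (∑ k ∈ Finset.Ico 1 n, fret B z k z * survD B z (n - k)) + survH B z n) ∧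
    (∀ γ : ℝ,
      (∑' n : ℕ, ENNReal.ofReal (Real.exp (γ * ((n : ℝ) + 1)) * survD B z (n + 1)))
        = (∑' n : ℕ, ENNReal.ofReal (Real.exp (γ * ((n : ℝ) + 1)) * fret B z (n + 1) z))
          * (∑' n : ℕ, ENNReal.ofReal (Real.exp (γ * ((n : ℝ) + 1)) * survD B z (n + 1)))
          + ∑' n : ℕ, ENNReal.ofReal (Real.exp (γ * ((n : ℝ) + 1)) * survH B z (n + 1))) :=
  stmt10_general B hnn hrow hsub z
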